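/- arXiv:0706.2465 — 2 statements merged into one kernel-verified Lean document; each statement's English description precedes it below -/
import Mathlib

section
/- Let B be an invertible upper triangular n×n matrix over a field and X a strictly lower triangular n×n matrix. Then the matrix B X B^{−1}, restricted to its strictly lower triangular part, together with its (non-strict) upper triangular part being in general nonzero, satisfies: the conjugation action X ↦ (strictly lower part of B X B^{−1}) defines a group action of the group of invertible upper triangular matrices on the space of strictly lower triangular matrices. That is, for B, B' invertible upper triangular, L(B', L(B, X)) = L(B'B, X), where L(B,X) denotes the strictly lower triangular part of B X B^{−1}. -/
/-!
Write `Y = lowerPart Y + U` with `U` upper triangular. Conjugating by an upper triangular `B'`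
keeps `U` upper triangular, so `U` contributes nothing to the strictly lower part of
`B' * Y * B'⁻¹`; hence `L(B', L(B, X)) = lowerPart (B' * (B * X * B⁻¹) * B'⁻¹)`, which is
`L(B' * B, X)` because `(B' * B)⁻¹ = B⁻¹ * B'⁻¹`.
-/

open Matrix

/-- The strictly lower triangular part of a matrix. -/
def lowerPart {F : Type*} [Field F] {n : ℕ} (M : Matrix (Fin n) (Fin n) F) :
    Matrix (Fin n) (Fin n) F :=
  Matrix.of fun i j => if j < i then M i j else 0

theorem Matrix.BlockTriangular.inv {α m R : Type*} [LinearOrder α] [Fintype m] [DecidableEq m]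
    [CommRing R] {M : Matrix m m R} {b : m → α} (hM : M.BlockTriangular b) :
    M⁻¹.BlockTriangular b := by
  by_cases h : IsUnit M.det
  · have := M.invertibleOfIsUnitDet h
    exact blockTriangular_inv_of_blockTriangular hM
  · rw [nonsing_inv_apply_not_isUnit M h]
    exact blockTriangular_zero

section LowerPart

variable {F : Type*} [Field F] {n : ℕ}

theorem lowerPart_sub (A C : Matrix (Fin n) (Fin n) F) :
    lowerPart (A - C) = lowerPart A - lowerPart C := by
  ext i j
  by_cases hji : j < i <;> simp [lowerPart, hji]

theorem lowerPart_eq_zero_of_blockTriangular {M : Matrix (Fin n) (Fin n) F}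
    (hM : M.BlockTriangular id) : lowerPart M = 0 := by
  ext i j
  simp only [lowerPart, of_apply, Matrix.zero_apply]
  split_ifs with hji
  exacts [hM hji, rfl]

theorem blockTriangular_sub_lowerPart (M : Matrix (Fin n) (Fin n) F) :
    (M - lowerPart M).BlockTriangular id := by
  intro i j hji
  simp [lowerPart, show j < i from hji]

theorem lowerPart_conj_lowerPart {B : Matrix (Fin n) (Fin n) F} (hB : B.BlockTriangular id)
    (Y : Matrix (Fin n) (Fin n) F) :
    lowerPart (B * lowerPart Y * B⁻¹) = lowerPart (B * Y * B⁻¹) := by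
  have hU : (B * (Y - lowerPart Y) * B⁻¹).BlockTriangular id :=
    (hB.mul (blockTriangular_sub_lowerPart Y)).mul hB.inv
  calc lowerPart (B * lowerPart Y * B⁻¹)
      = lowerPart (B * Y * B⁻¹ - B * (Y - lowerPart Y) * B⁻¹) := by
        rw [Matrix.mul_sub, Matrix.sub_mul, sub_sub_cancel]
    _ = lowerPart (B * Y * B⁻¹) := by
        rw [lowerPart_sub, lowerPart_eq_zero_of_blockTriangular hU, sub_zero]

end LowerPart

theorem stmt12_general (F : Type*) [Field F] (n : ℕ) (B B' X : Matrix (Fin n) (Fin n) F)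
    (hB' : ∀ i j : Fin n, j < i → B' i j = 0) :
    lowerPart (B' * lowerPart (B * X * B⁻¹) * B'⁻¹) =
      lowerPart ((B' * B) * X * (B' * B)⁻¹) := by
  rw [lowerPart_conj_lowerPart (fun i j hji => hB' i j hji), Matrix.mul_inv_rev]
  simp only [Matrix.mul_assoc]

/-- `X ↦ L(B,X) :=` strictly lower part of `B X B⁻¹` defines an
action of the group of invertible upper triangular matrices on strictly lower
triangular matrices: `L(B', L(B,X)) = L(B'B, X)`. -/
theorem stmt12 (F : Type*) [Field F] (n : ℕ) (B B' X : Matrix (Fin n) (Fin n) F)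
    (hBunit : IsUnit B.det) (hB'unit : IsUnit B'.det)
    (hB : ∀ i j : Fin n, j < i → B i j = 0)
    (hB' : ∀ i j : Fin n, j < i → B' i j = 0)
    (hX : ∀ i j : Fin n, i ≤ j → X i j = 0) :
    lowerPart (B' * lowerPart (B * X * B⁻¹) * B'⁻¹) =
      lowerPart ((B' * B) * X * (B' * B)⁻¹) :=
  stmt12_general F n B B' X hB'
end

section
/- In the universal enveloping algebra of t0(4) (strictly upper triangular 4×4 matrices, basis e_{12}, e_{13}, e_{14}, e_{23}, e_{24}, e_{34}), the element C = e_{13} e_{24} − e_{14} e_{23} commutes with every generator e_{ij} (1 ≤ i < j ≤ 4), i.e., C is a Casimir operator of t0(4). -/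
/-!
In the enveloping algebra of the matrix Lie algebra,
`⁅e_{ab}, e_{cd}⁆ = δ_{bc} e_{ad} - δ_{da} e_{cb}`, and bracketing with `e_{ij}` is a derivation,
so `⁅e_{ij}, C⁆` is computed from the brackets of `e_{ij}` with the four entries of `C`.
Only `e_{12}` and `e_{34}` bracket nontrivially with them: `e_{34}` gives
`-e_{14} e_{24} + e_{14} e_{24} = 0`, and `e_{12}` gives `⁅e_{13}, e_{14}⁆ = 0`
(indices here are 1-based, as in the paper; `Fin 4` is 0-based).
-/

open Matrix

attribute [local instance 100] LieRing.ofAssociativeRing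

theorem Ring.lie_mul {A : Type*} [Ring A] (x y z : A) :
    ⁅x, y * z⁆ = ⁅x, y⁆ * z + y * ⁅x, z⁆ := by
  simp only [Ring.lie_def]
  noncomm_ring

namespace UniversalEnvelopingAlgebra

variable (R : Type*) {n : Type*} [CommRing R] [Fintype n] [DecidableEq n]

noncomputable def matrixUnit (a b : n) : UniversalEnvelopingAlgebra R (Matrix n n R) :=
  ι R (single a b 1)

theorem lie_matrixUnit (a b c d : n) :
    ⁅matrixUnit R a b, matrixUnit R c d⁆ =
      (if b = c then matrixUnit R a d else 0) - (if d = a then matrixUnit R c b else 0) := by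
  rw [matrixUnit, matrixUnit, ← LieHom.map_lie, Ring.lie_def, map_sub]
  congr 1 <;> split_ifs <;> simp [matrixUnit, single_mul_single_of_ne, *]

theorem lie_matrixUnit_casimir (i j : Fin 4) (hij : i < j) :
    ⁅matrixUnit R i j, matrixUnit R (0 : Fin 4) 2 * matrixUnit R (1 : Fin 4) 3 -
      matrixUnit R (0 : Fin 4) 3 * matrixUnit R (1 : Fin 4) 2⁆ = 0 := by
  rw [lie_sub, Ring.lie_mul, Ring.lie_mul]
  fin_cases i <;> fin_cases j <;> simp [lie_matrixUnit, ← Ring.lie_def] at hij ⊢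

end UniversalEnvelopingAlgebra

/-- in the universal enveloping algebra, the element
`C = e₁₃e₂₄ − e₁₄e₂₃` (the 2×2 determinant `det(e_{ij})_{i=1,2; j=3,4}`)
commutes with every generator `e_{ij}` (`i < j`) of `t0(4)`, i.e. `C` is a
Casimir operator of `t0(4)`. -/
theorem stmt18 (F : Type*) [Field F] :
    let ι := UniversalEnvelopingAlgebra.ι F (L := Matrix (Fin 4) (Fin 4) F)
    let C := ι (Matrix.single (0 : Fin 4) (2 : Fin 4) (1 : F)) *
        ι (Matrix.single (1 : Fin 4) (3 : Fin 4) (1 : F)) -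
      ι (Matrix.single (0 : Fin 4) (3 : Fin 4) (1 : F)) *
        ι (Matrix.single (1 : Fin 4) (2 : Fin 4) (1 : F))
    ∀ i j : Fin 4, i < j →
      C * ι (Matrix.single i j (1 : F)) =
        ι (Matrix.single i j (1 : F)) * C := by
  intro ι C i j hij
  exact (commute_iff_lie_eq.2 (UniversalEnvelopingAlgebra.lie_matrixUnit_casimir F i j hij)).symm
end
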